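/- For $f \in C^d_u(\mathbb{R})$ (all derivatives up to order $d$ bounded and uniformly continuous), any $0 < R < 1$, and $j = 0,\dots,d$, there is a constant $C$ depending only on $\Lambda$, $R$, and $\|f\|_{d,\infty}$ such that $|\partial_h^j T_{p,\Lambda} f(x,h) - T_{d-j} f^{(j)}(x,h)| \le C\,|h|^{d-j+1}$ uniformly in $x \in \mathbb{R}$ and $|h| < R$. -/

import Mathlib

open scoped Matrix

/-- The confluent Vandermonde matrix `V_d` (`d = p + r`): columns `0,…,p` are
`j! e_j`, columns `p+1,…,d` are `[λ_k^i]_{i=0}^d`. -/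
noncomputable def Vand (p r : ℕ) (l : Fin r → ℝ) :
    Matrix (Fin (p + r + 1)) (Fin (p + r + 1)) ℝ :=
  Matrix.of fun i c =>
    if hc : (c : ℕ) ≤ p then (if (i : ℕ) = (c : ℕ) then ((c : ℕ).factorial : ℝ) else 0)
    else l ⟨(c : ℕ) - (p + 1), by have := c.isLt; omega⟩ ^ (i : ℕ)

/-- The row vector `[1, h, …, h^p, e^{λ_1 h}, …, e^{λ_r h}]`. -/
noncomputable def expBasis (p r : ℕ) (l : Fin r → ℝ) (h : ℝ) : Fin (p + r + 1) → ℝ :=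
  fun c =>
    if hc : (c : ℕ) ≤ p then h ^ (c : ℕ)
    else Real.exp (l ⟨(c : ℕ) - (p + 1), by have := c.isLt; omega⟩ * h)

/-- The vector of derivatives `v_f(x) = [f^(j)(x)]_{j=0}^d`. -/
noncomputable def vder (d : ℕ) (f : ℝ → ℝ) (x : ℝ) : Fin (d + 1) → ℝ :=
  fun i => iteratedDeriv (i : ℕ) f x

/-- The generalized Taylor expansion
`T_{p,Λ} f (x,h) = [1,…,h^p,e^{λ_1 h},…,e^{λ_r h}] V_d⁻¹ v_f(x)`. -/
noncomputable def Tgen (p r : ℕ) (l : Fin r → ℝ) (f : ℝ → ℝ) (x h : ℝ) : ℝ :=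
  expBasis p r l h ⬝ᵥ ((Vand p r l)⁻¹ *ᵥ vder (p + r) f x)

/-- The classical Taylor polynomial `T_d f (x,h) = ∑_{j=0}^d f^(j)(x) h^j / j!`. -/
noncomputable def Tcl (d : ℕ) (f : ℝ → ℝ) (x h : ℝ) : ℝ :=
  ∑ j ∈ Finset.range (d + 1), iteratedDeriv j f x / (Nat.factorial j : ℝ) * h ^ j

/-- The Euclidean norm on `Fin n → ℝ`. -/
noncomputable def enorm2 (n : ℕ) (v : Fin n → ℝ) : ℝ := Real.sqrt (∑ i, v i ^ 2)

/-- `f ∈ C^d_u(ℝ)`: `d`-times continuously differentiable with all derivatives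
up to order `d` bounded and uniformly continuous. -/
def CdU (d : ℕ) (f : ℝ → ℝ) : Prop :=
  ContDiff ℝ (d : ℕ) f ∧
    ∀ i ≤ d, (∃ B, ∀ x, |iteratedDeriv i f x| ≤ B) ∧
      UniformContinuous (iteratedDeriv i f)

/-!
The derivatives of order `0, …, d` at `0` of the entries of `expBasis` are exactly the columns of
`Vand`. Once `Vand` is invertible, `G = T_{p,Λ} f(x, ·)` therefore has the same `d`-jet at `0` as
`f` has at `x`, so `G^(j) - T_{d-j} f^(j)(x, ·)` vanishes to order `d - j` at `0` and its
derivative of order `d - j + 1` is `G^(d+1)`. Under `d + 1` derivatives the polynomial entries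
vanish and, for `|h| ≤ 1`, the exponential ones are bounded by `|λ_k|^(d+1) e^|λ_k|`, while the
weights `V⁻¹ v_f(x)` are bounded uniformly in `x` by the sup norms of the `f^(i)`. Iterating the
mean value theorem gives the bound `C |h|^(d-j+1)`.

`Vand` is invertible: a row vector annihilating it vanishes on the first `p + 1` coordinates, since
those columns are multiples of unit vectors, and on the remaining ones it solves a transposed
Vandermonde system in the distinct `λ_k` once the factors `λ_k^(p+1) ≠ 0` are divided out.
-/

open Finset Matrix
open scoped ContDiff

section IteratedDeriv

variable {𝕜 : Type*} [NontriviallyNormedField 𝕜] {E : Type*} [NormedAddCommGroup E]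
  [NormedSpace 𝕜 E]

theorem iteratedDeriv_iteratedDeriv (i j : ℕ) (f : 𝕜 → E) :
    iteratedDeriv i (iteratedDeriv j f) = iteratedDeriv (i + j) f := by
  simp only [iteratedDeriv_eq_iterate, Function.iterate_add_apply]

end IteratedDeriv

section Remainder

variable {E : Type*} [NormedAddCommGroup E] [NormedSpace ℝ E]

theorem norm_le_mul_abs_of_norm_deriv_le {ψ : ℝ → E} (hψ : Differentiable ℝ ψ) (h0 : ψ 0 = 0)
    {K h : ℝ} (hK : ∀ t, |t| ≤ |h| → ‖deriv ψ t‖ ≤ K) : ‖ψ h‖ ≤ K * |h| := by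
  simpa [h0] using (convex_closedBall (0 : ℝ) |h|).norm_image_sub_le_of_norm_deriv_le
    (fun t _ => hψ t) (fun t ht => hK t (by simpa using ht))
    (Metric.mem_closedBall_self (abs_nonneg h)) (by simp : h ∈ Metric.closedBall 0 |h|)

theorem norm_le_mul_pow_of_iteratedDeriv_eq_zero {m : ℕ} {ψ : ℝ → E}
    (hψ : ContDiff ℝ (m + 1) ψ) (h0 : ∀ i ≤ m, iteratedDeriv i ψ 0 = 0) {M h : ℝ}
    (hM : ∀ t, |t| ≤ |h| → ‖iteratedDeriv (m + 1) ψ t‖ ≤ M) : ‖ψ h‖ ≤ M * |h| ^ (m + 1) := by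
  induction m generalizing ψ M h with
  | zero =>
    simpa using norm_le_mul_abs_of_norm_deriv_le (hψ.differentiable (by simp))
      (by simpa using h0 0 le_rfl) (by simpa using hM)
  | succ m ih =>
    have hM0 : 0 ≤ M := (norm_nonneg _).trans (hM 0 (by simp))
    have hderiv : ∀ t, |t| ≤ |h| → ‖deriv ψ t‖ ≤ M * |h| ^ (m + 1) := fun t ht => by
      refine (ih (by simpa using hψ.deriv') (fun i hi => ?_) (M := M) (h := t)
        (fun s hs => ?_)).trans ?_
      · simpa [iteratedDeriv_succ'] using h0 (i + 1) (by omega)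
      · simpa [iteratedDeriv_succ'] using hM s (hs.trans ht)
      · gcongr
    calc ‖ψ h‖ ≤ M * |h| ^ (m + 1) * |h| :=
          norm_le_mul_abs_of_norm_deriv_le (hψ.differentiable (by simp))
            (by simpa using h0 0 (by omega)) hderiv
      _ = M * |h| ^ (m + 1 + 1) := by ring

end Remainder

section Taylor

variable (n : ℕ) (F : ℝ → ℝ) (x : ℝ)

theorem contDiff_Tcl : ContDiff ℝ ∞ (Tcl n F x) := by
  unfold Tcl; fun_prop

theorem iteratedDeriv_Tcl_zero {i : ℕ} (hi : i ≤ n) :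
    iteratedDeriv i (Tcl n F x) 0 = iteratedDeriv i F x := by
  unfold Tcl
  rw [iteratedDeriv_fun_sum fun k _ => by fun_prop]
  simp only [iteratedDeriv_const_mul_field, iteratedDeriv_fun_pow_zero, Nat.cast_ite,
    Nat.cast_zero, mul_ite, mul_zero, sum_ite_eq, mem_range]
  rw [if_pos (by omega), div_mul_cancel₀ _ (by positivity)]

theorem iteratedDeriv_succ_Tcl : iteratedDeriv (n + 1) (Tcl n F x) = 0 := by
  ext t
  unfold Tcl
  rw [iteratedDeriv_fun_sum fun k _ => by fun_prop]
  refine sum_eq_zero fun k hk => ?_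
  simp only [iteratedDeriv_const_mul_field, iteratedDeriv_pow,
    Nat.descFactorial_eq_zero_iff_lt.mpr (mem_range.mp hk)]
  simp

end Taylor

theorem abs_iteratedDeriv_sub_Tcl_le {G F : ℝ → ℝ} {d j : ℕ} {x M h : ℝ}
    (hG : ContDiff ℝ ∞ G) (hjet : ∀ n ≤ d, iteratedDeriv n G 0 = iteratedDeriv n F x)
    (hj : j ≤ d) (hM : ∀ t, |t| ≤ |h| → |iteratedDeriv (d + 1) G t| ≤ M) :
    |iteratedDeriv j G h - Tcl (d - j) (iteratedDeriv j F) x h| ≤ M * |h| ^ (d - j + 1) := by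
  have hGj : ContDiff ℝ ∞ (iteratedDeriv j G) := by
    rw [iteratedDeriv_eq_iterate]; exact hG.iterate_deriv j
  have hT := contDiff_Tcl (d - j) (iteratedDeriv j F) x
  have hderiv : ∀ i t,
      iteratedDeriv i (fun s => iteratedDeriv j G s - Tcl (d - j) (iteratedDeriv j F) x s) t
        = iteratedDeriv (i + j) G t - iteratedDeriv i (Tcl (d - j) (iteratedDeriv j F) x) t := by
    intro i t
    rw [iteratedDeriv_fun_sub (contDiff_infty.mp hGj i).contDiffAt
      (contDiff_infty.mp hT i).contDiffAt, iteratedDeriv_iteratedDeriv]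
  refine norm_le_mul_pow_of_iteratedDeriv_eq_zero (contDiff_infty.mp (hGj.sub hT) _)
    (fun i hi => ?_) (fun t ht => ?_)
  · rw [hderiv, hjet _ (by omega), iteratedDeriv_Tcl_zero _ _ _ hi, iteratedDeriv_iteratedDeriv,
      sub_self]
  · rw [hderiv, iteratedDeriv_succ_Tcl, Pi.zero_apply, sub_zero,
      show d - j + 1 + j = d + 1 by omega]
    exact hM t ht

theorem CdU.exists_bound {d : ℕ} {f : ℝ → ℝ} (hf : CdU d f) :
    ∃ B, ∀ i ≤ d, ∀ x, |iteratedDeriv i f x| ≤ B := by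
  choose B hB using fun i : Fin (d + 1) => (hf.2 i (by omega)).1
  obtain ⟨B', hB'⟩ := Finite.exists_le B
  exact ⟨B', fun i hi x => (hB ⟨i, by omega⟩ x).trans (hB' _)⟩

theorem abs_mulVec_apply_le {m n : Type*} [Fintype n] (A : Matrix m n ℝ) {v : n → ℝ} {B : ℝ}
    (hv : ∀ i, |v i| ≤ B) (c : m) : |(A *ᵥ v) c| ≤ ∑ i, |A c i| * B :=
  (abs_sum_le_sum_abs _ _).trans <| sum_le_sum fun i _ => by
    rw [abs_mul]; exact mul_le_mul_of_nonneg_left (hv i) (abs_nonneg _)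

section Basis

variable {p r : ℕ} (l : Fin r → ℝ)

def expIndex (p : ℕ) (k : Fin r) : Fin (p + r + 1) := ⟨p + 1 + k, by omega⟩

theorem expIndex_injective : Function.Injective (expIndex (r := r) p) := fun a b hab =>
  Fin.ext (by simpa [expIndex] using congrArg Fin.val hab)

theorem le_or_exists_expIndex (c : Fin (p + r + 1)) :
    (c : ℕ) ≤ p ∨ ∃ k, c = expIndex p k := by
  refine (le_or_gt (c : ℕ) p).imp_right fun hc => ⟨⟨c - (p + 1), by omega⟩, ?_⟩
  ext; simp only [expIndex]; omega

theorem Vand_of_le (i : Fin (p + r + 1)) {c : Fin (p + r + 1)} (hc : (c : ℕ) ≤ p) :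
    Vand p r l i c = if (i : ℕ) = c then ((c : ℕ).factorial : ℝ) else 0 := by
  simp [Vand, hc]

theorem Vand_expIndex (i : Fin (p + r + 1)) (k : Fin r) :
    Vand p r l i (expIndex p k) = l k ^ (i : ℕ) := by
  simp [Vand, expIndex, show ¬p + 1 + (k : ℕ) ≤ p by omega]

theorem expBasis_of_le {c : Fin (p + r + 1)} (hc : (c : ℕ) ≤ p) :
    (fun h => expBasis p r l h c) = (· ^ (c : ℕ)) := by
  ext h; simp [expBasis, hc]

theorem expBasis_expIndex (k : Fin r) :
    (fun h => expBasis p r l h (expIndex p k)) = fun h => Real.exp (l k * h) := by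
  ext h; simp [expBasis, expIndex, show ¬p + 1 + (k : ℕ) ≤ p by omega]

theorem contDiff_expBasis (c : Fin (p + r + 1)) :
    ContDiff ℝ ∞ (fun h => expBasis p r l h c) := by
  rcases le_or_exists_expIndex c with hc | ⟨k, rfl⟩
  · rw [expBasis_of_le l hc]; fun_prop
  · rw [expBasis_expIndex]; fun_prop

theorem iteratedDeriv_expBasis_zero {n : ℕ} (hn : n < p + r + 1) (c : Fin (p + r + 1)) :
    iteratedDeriv n (fun h => expBasis p r l h c) 0 = Vand p r l ⟨n, hn⟩ c := by
  rcases le_or_exists_expIndex c with hc | ⟨k, rfl⟩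
  · rw [expBasis_of_le l hc, iteratedDeriv_fun_pow_zero, Vand_of_le l _ hc]; simp
  · rw [expBasis_expIndex, iteratedDeriv_exp_const_mul, Vand_expIndex]; simp

theorem abs_iteratedDeriv_expBasis_le {n : ℕ} (hn : p < n) (c : Fin (p + r + 1)) {t : ℝ}
    (ht : |t| ≤ 1) :
    |iteratedDeriv n (fun h => expBasis p r l h c) t| ≤ ∑ k, |l k| ^ n * Real.exp |l k| := by
  rcases le_or_exists_expIndex c with hc | ⟨k, rfl⟩
  · rw [expBasis_of_le l hc, iteratedDeriv_pow, Nat.descFactorial_eq_zero_iff_lt.mpr (by omega)]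
    simp only [Nat.cast_zero, zero_mul, abs_zero]
    positivity
  · rw [expBasis_expIndex, iteratedDeriv_exp_const_mul, abs_mul, abs_pow, Real.abs_exp]
    refine le_trans ?_ (single_le_sum (fun k _ => by positivity) (mem_univ k))
    gcongr
    calc l k * t ≤ |l k| * |t| := (le_abs_self _).trans (abs_mul _ _).le
      _ ≤ |l k| := mul_le_of_le_one_right (abs_nonneg _) ht

theorem isUnit_det_Vand (h0 : ∀ k, l k ≠ 0) (hinj : Function.Injective l) :
    IsUnit (Vand p r l).det := by
  rw [isUnit_iff_ne_zero, Ne, ← exists_vecMul_eq_zero_iff]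
  rintro ⟨a, ha0, ha⟩
  refine ha0 (funext fun i => ?_)
  have hcol : ∀ c, ∑ i, a i * Vand p r l i c = 0 := fun c => congrFun ha c
  have hpoly : ∀ i : Fin (p + r + 1), (i : ℕ) ≤ p → a i = 0 := by
    intro i hi
    have hi' := hcol i
    rw [sum_eq_single i (fun b _ hb => by simp [Vand_of_le l _ hi, Fin.val_ne_of_ne hb])
      (by simp), Vand_of_le l _ hi, if_pos rfl] at hi'
    exact (mul_eq_zero.mp hi').resolve_right (by positivity)
  have hexp : (fun k => a (expIndex p k)) = 0 := by
    refine eq_zero_of_forall_index_sum_pow_mul_eq_zero hinj fun k => ?_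
    have hk := hcol (expIndex p k)
    simp only [Vand_expIndex] at hk
    rw [← Fintype.sum_of_injective (expIndex p) expIndex_injective
      (fun m => a (expIndex p m) * l k ^ (p + 1 + (m : ℕ))) _ ?_ (fun _ => rfl)] at hk
    · have : l k ^ (p + 1) * ∑ m : Fin r, l k ^ (m : ℕ) * a (expIndex p m) = 0 := by
        rw [mul_sum, ← hk]
        exact sum_congr rfl fun m _ => by rw [pow_add]; ring
      exact (mul_eq_zero.mp this).resolve_left (pow_ne_zero _ (h0 k))
    · intro c hc
      rcases le_or_exists_expIndex c with hc' | ⟨m, rfl⟩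
      · rw [hpoly c hc', zero_mul]
      · exact absurd ⟨m, rfl⟩ hc
  rcases le_or_exists_expIndex i with hi | ⟨k, rfl⟩
  · exact hpoly i hi
  · exact congrFun hexp k

theorem iteratedDeriv_expBasis_dotProduct (w : Fin (p + r + 1) → ℝ) (n : ℕ) (t : ℝ) :
    iteratedDeriv n (fun h => expBasis p r l h ⬝ᵥ w) t
      = ∑ c, iteratedDeriv n (fun h => expBasis p r l h c) t * w c := by
  simp only [dotProduct]
  rw [iteratedDeriv_fun_sum fun c _ => ((contDiff_infty.mp (contDiff_expBasis l c) n).mul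
    contDiff_const).contDiffAt]
  simp only [mul_comm _ (w _), iteratedDeriv_const_mul_field]

theorem contDiff_expBasis_dotProduct (w : Fin (p + r + 1) → ℝ) :
    ContDiff ℝ ∞ (fun h => expBasis p r l h ⬝ᵥ w) :=
  ContDiff.sum fun c _ => (contDiff_expBasis l c).mul contDiff_const

theorem iteratedDeriv_expBasis_dotProduct_zero (w : Fin (p + r + 1) → ℝ) {n : ℕ}
    (hn : n < p + r + 1) :
    iteratedDeriv n (fun h => expBasis p r l h ⬝ᵥ w) 0 = (Vand p r l *ᵥ w) ⟨n, hn⟩ := by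
  simp only [iteratedDeriv_expBasis_dotProduct, iteratedDeriv_expBasis_zero l hn]
  rfl

end Basis

section Tgen

variable {p r : ℕ} (l : Fin r → ℝ) (f : ℝ → ℝ)

theorem contDiff_Tgen (x : ℝ) : ContDiff ℝ ∞ (fun t => Tgen p r l f x t) :=
  contDiff_expBasis_dotProduct l _

theorem iteratedDeriv_Tgen_zero (hV : IsUnit (Vand p r l).det) (x : ℝ) {n : ℕ}
    (hn : n ≤ p + r) :
    iteratedDeriv n (fun t => Tgen p r l f x t) 0 = iteratedDeriv n f x := by
  calc _ = (Vand p r l *ᵥ ((Vand p r l)⁻¹ *ᵥ vder (p + r) f x)) ⟨n, by omega⟩ :=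
        iteratedDeriv_expBasis_dotProduct_zero l _ _
    _ = iteratedDeriv n f x := by rw [mulVec_mulVec, mul_nonsing_inv _ hV, one_mulVec]; rfl

theorem exists_bound_iteratedDeriv_Tgen {B : ℝ}
    (hB : ∀ i ≤ p + r, ∀ x, |iteratedDeriv i f x| ≤ B) :
    ∃ M, ∀ x t, |t| ≤ 1 → |iteratedDeriv (p + r + 1) (fun s => Tgen p r l f x s) t| ≤ M := by
  set K := ∑ k, |l k| ^ (p + r + 1) * Real.exp |l k|
  have hK : 0 ≤ K := by positivity
  refine ⟨∑ c, K * ∑ i, |(Vand p r l)⁻¹ c i| * B, fun x t ht => ?_⟩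
  have hv : ∀ i, |vder (p + r) f x i| ≤ B := fun i => hB i (by omega) x
  calc |iteratedDeriv (p + r + 1) (fun s => Tgen p r l f x s) t|
      = |∑ c, iteratedDeriv (p + r + 1) (fun h => expBasis p r l h c) t *
          ((Vand p r l)⁻¹ *ᵥ vder (p + r) f x) c| :=
        congrArg _ (iteratedDeriv_expBasis_dotProduct l _ _ t)
    _ ≤ ∑ c, K * ∑ i, |(Vand p r l)⁻¹ c i| * B :=
      (abs_sum_le_sum_abs _ _).trans <| sum_le_sum fun c _ => by
        rw [abs_mul]
        exact mul_le_mul (abs_iteratedDeriv_expBasis_le l (by omega) c ht)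
          (abs_mulVec_apply_le _ hv c) (abs_nonneg _) hK

end Tgen

theorem tgen_deriv_sub_taylor_uniform_bound_general (p r : ℕ)
    (l : Fin r → ℝ) (h0 : ∀ k, l k ≠ 0) (hinj : Function.Injective l)
    (f : ℝ → ℝ) (hf : CdU (p + r) f)
    (R : ℝ) (hR1 : R < 1) :
    ∃ C > 0, ∀ j : ℕ, j ≤ p + r → ∀ x h : ℝ, |h| < R →
      |iteratedDeriv j (fun t => Tgen p r l f x t) h -
          Tcl (p + r - j) (iteratedDeriv j f) x h| ≤
        C * |h| ^ (p + r - j + 1) := by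
  obtain ⟨B, hB⟩ := hf.exists_bound
  obtain ⟨M, hM⟩ := exists_bound_iteratedDeriv_Tgen l f hB
  refine ⟨max M 1, lt_max_of_lt_right one_pos, fun j hj x h hh => ?_⟩
  calc _ ≤ M * |h| ^ (p + r - j + 1) :=
        abs_iteratedDeriv_sub_Tcl_le (contDiff_Tgen l f x)
          (fun n hn => iteratedDeriv_Tgen_zero l f (isUnit_det_Vand l h0 hinj) x hn) hj
          (fun t ht => hM x t (by linarith))
    _ ≤ max M 1 * |h| ^ (p + r - j + 1) := by gcongr; exact le_max_left M 1

/-- for `f ∈ C^d_u(ℝ)` and `0 < R < 1` there is `C` with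
`|∂_h^j T_{p,Λ} f(x,h) - T_{d-j} f^(j)(x,h)| ≤ C |h|^{d-j+1}` uniformly in
`x ∈ ℝ` and `|h| < R`, for every `j = 0,…,d`. -/
theorem tgen_deriv_sub_taylor_uniform_bound (p r : ℕ) (hr : 1 ≤ r)
    (l : Fin r → ℝ) (h0 : ∀ k, l k ≠ 0) (hinj : Function.Injective l)
    (f : ℝ → ℝ) (hf : CdU (p + r) f)
    (R : ℝ) (hR0 : 0 < R) (hR1 : R < 1) :
    ∃ C > 0, ∀ j : ℕ, j ≤ p + r → ∀ x h : ℝ, |h| < R →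
      |iteratedDeriv j (fun t => Tgen p r l f x t) h -
          Tcl (p + r - j) (iteratedDeriv j f) x h| ≤
        C * |h| ^ (p + r - j + 1) :=
  tgen_deriv_sub_taylor_uniform_bound_general p r l h0 hinj f hf R hR1
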